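/- arXiv:1705.09941 — 2 statements merged into one kernel-verified Lean document; each statement's English description precedes it below -/
import Mathlib

section
/- Let K be a compact subset of a metric space X with at most m connected components, and suppose K contains a δ-connected subset K'. Then H^1(K) ≥ diam(K') − m·δ. -/
/-!
A preconnected set `C` satisfies `diam C ≤ H¹(C)`: the 1-Lipschitz map `dist x` sends `C` onto an
interval containing `[0, dist x y]`. A `δ`-chain from `x` to `y` in `K'` meets at most `m`
components of `K`; cutting it after its last point in the component of its first point and
recursing on the remaining components gives `dist x y ≤ ∑ diam C + m δ`, and the components are
disjoint closed subsets of `K`, so their diameters add up to at most `H¹(K)`.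
-/

open MeasureTheory ENNReal

/-- A set `A` is `δ`-connected if any two of its points are joined by a `δ`-chain in `A`. -/
def DeltaConnected {X : Type*} [MetricSpace X] (δ : ℝ) (A : Set X) : Prop :=
  ∀ x ∈ A, ∀ y ∈ A, ∃ (n : ℕ) (c : Fin (n + 1) → X),
    (∀ i, c i ∈ A) ∧ c 0 = x ∧ c (Fin.last n) = y ∧
      ∀ i : Fin n, dist (c i.castSucc) (c i.succ) ≤ δ

open Finset Metric

theorem edist_le_sum_ediam_add_card_mul {X : Type*} [PseudoEMetricSpace X]
    (J : Finset (Set X)) {δ : ℝ≥0∞} {n : ℕ} {c : ℕ → X}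
    (hcov : ∀ i ≤ n, ∃ C ∈ J, c i ∈ C) (hstep : ∀ i < n, edist (c i) (c (i + 1)) ≤ δ) :
    edist (c 0) (c n) ≤ ∑ C ∈ J, ediam C + #J * δ := by
  classical
  induction J using Finset.strongInduction generalizing n c with
  | H J ih =>
  obtain ⟨C, hCJ, hc0⟩ := hcov 0 n.zero_le
  obtain ⟨k, hk⟩ : ∃ k, k = Nat.findGreatest (fun i => c i ∈ C) n := ⟨_, rfl⟩
  have hck : c k ∈ C := hk ▸ Nat.findGreatest_spec (P := fun i => c i ∈ C) n.zero_le hc0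
  have hhead : edist (c 0) (c k) ≤ ediam C := edist_le_ediam_of_mem hc0 hck
  have hsplit : ∑ C' ∈ J, ediam C' + #J * δ =
      ediam C + δ + (∑ C' ∈ J.erase C, ediam C' + #(J.erase C) * δ) := by
    rw [← add_sum_erase _ _ hCJ, ← card_erase_add_one hCJ]
    push_cast
    ring
  rcases (hk ▸ Nat.findGreatest_le n : k ≤ n).eq_or_lt with rfl | hlt
  · rw [hsplit, add_assoc]
    exact hhead.trans le_self_add
  have htail : edist (c (k + 1)) (c n) ≤ ∑ C' ∈ J.erase C, ediam C' + #(J.erase C) * δ := by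
    have h := ih (J.erase C) (erase_ssubset hCJ) (n := n - (k + 1)) (c := fun j => c (k + 1 + j))
      (fun j hj => ?_) (fun j hj => by simpa [add_assoc] using hstep (k + 1 + j) (by omega))
    · simpa [Nat.add_sub_cancel' hlt] using h
    obtain ⟨C', hC'J, hC'⟩ := hcov (k + 1 + j) (by omega)
    refine ⟨C', mem_erase.2 ⟨?_, hC'J⟩, hC'⟩
    rintro rfl
    exact Nat.findGreatest_is_greatest (P := fun i => c i ∈ C') (n := n) (by omega) (by omega) hC'
  calc edist (c 0) (c n) ≤ edist (c 0) (c k) + edist (c k) (c (k + 1)) + edist (c (k + 1)) (c n) :=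
        edist_triangle4 _ _ _ _
    _ ≤ _ := by rw [hsplit]; gcongr; exact hstep k hlt

theorem IsPreconnected.ediam_le_hausdorffMeasure_one {X : Type*} [MetricSpace X]
    [MeasurableSpace X] [BorelSpace X] {s : Set X} (hs : IsPreconnected s) :
    ediam s ≤ μH[1] s := by
  refine ediam_le fun x hx y hy => ?_
  have hf : LipschitzWith 1 (dist x) := LipschitzWith.dist_right x
  have hIcc : Set.Icc 0 (dist x y) ⊆ dist x '' s :=
    (hs.image _ hf.continuous.continuousOn).ordConnected.out ⟨x, hx, dist_self x⟩ ⟨y, hy, rfl⟩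
  calc edist x y = volume (Set.Icc 0 (dist x y)) := by rw [Real.volume_Icc, sub_zero, edist_dist]
    _ ≤ μH[1] (dist x '' s) := by rw [hausdorffMeasure_real]; exact measure_mono hIcc
    _ ≤ μH[1] s := by simpa using hf.hausdorffMeasure_image_le zero_le_one s

theorem sum_ediam_le_hausdorffMeasure_biUnion {X : Type*} [MetricSpace X]
    [MeasurableSpace X] [BorelSpace X] {J : Finset (Set X)}
    (hdisj : (J : Set (Set X)).PairwiseDisjoint id) (hmeas : ∀ C ∈ J, MeasurableSet C)
    (hconn : ∀ C ∈ J, IsPreconnected C) :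
    ∑ C ∈ J, ediam C ≤ μH[1] (⋃ C ∈ J, C) := by
  calc ∑ C ∈ J, ediam C ≤ ∑ C ∈ J, μH[1] C :=
        sum_le_sum fun C hC => (hconn C hC).ediam_le_hausdorffMeasure_one
    _ = μH[1] (⋃ C ∈ J, C) := (measure_biUnion_finset hdisj hmeas).symm

theorem IsClosed.connectedComponentIn {X : Type*} [TopologicalSpace X] {K : Set X}
    (hK : IsClosed K) (x : X) : IsClosed (connectedComponentIn K x) := by
  by_cases hx : x ∈ K
  · exact isClosed_of_closure_subset <|
      isPreconnected_connectedComponentIn.closure.subset_connectedComponentIn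
        (subset_closure (mem_connectedComponentIn hx))
        (hK.closure_subset_iff.2 (connectedComponentIn_subset K x))
  · rw [connectedComponentIn_eq_empty hx]
    exact isClosed_empty

theorem pairwiseDisjoint_connectedComponentIn {X : Type*} [TopologicalSpace X] (K : Set X)
    (J : Finset (Set X)) (hJ : ∀ C ∈ J, ∃ x, connectedComponentIn K x = C) :
    (J : Set (Set X)).PairwiseDisjoint id := by
  rintro _ hC _ hD hCD
  obtain ⟨x, rfl⟩ := hJ _ hC
  obtain ⟨y, rfl⟩ := hJ _ hD
  refine Set.disjoint_left.2 fun z hzx hzy => hCD ?_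
  rw [connectedComponentIn_eq hzx, connectedComponentIn_eq hzy]

theorem sum_ediam_connectedComponentIn_le_hausdorffMeasure {X : Type*} [MetricSpace X]
    [MeasurableSpace X] [BorelSpace X] {K : Set X} (hK : IsClosed K) (J : Finset (Set X))
    (hJ : ∀ C ∈ J, ∃ x, connectedComponentIn K x = C) :
    ∑ C ∈ J, ediam C ≤ μH[1] K := by
  refine (sum_ediam_le_hausdorffMeasure_biUnion (pairwiseDisjoint_connectedComponentIn K J hJ)
    (fun C hC => ?_) (fun C hC => ?_)).trans (measure_mono (Set.iUnion₂_subset fun C hC => ?_))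
  all_goals obtain ⟨x, rfl⟩ := hJ C hC
  · exact (hK.connectedComponentIn x).measurableSet
  · exact isPreconnected_connectedComponentIn
  · exact connectedComponentIn_subset K x

theorem DeltaConnected.exists_nat_chain {X : Type*} [MetricSpace X] {δ : ℝ} {A : Set X}
    (hA : DeltaConnected δ A) {x y : X} (hx : x ∈ A) (hy : y ∈ A) :
    ∃ (n : ℕ) (c : ℕ → X), (∀ i ≤ n, c i ∈ A) ∧ c 0 = x ∧ c n = y ∧
      ∀ i < n, dist (c i) (c (i + 1)) ≤ δ := by
  obtain ⟨n, c, hcA, rfl, rfl, hstep⟩ := hA x hx y hy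
  refine ⟨n, fun i => c (Fin.ofNat (n + 1) i), fun i _ => hcA _, by simp, by simp, fun i hi => ?_⟩
  convert hstep ⟨i, hi⟩ using 3 <;> ext <;> simp <;> omega

theorem stmt8_general {X : Type*} [MetricSpace X] [MeasurableSpace X] [BorelSpace X]
    (K : Set X) (hK : IsCompact K) (m : ℕ)
    (hcomp : ∃ I : Finset (Set X), I.card ≤ m ∧ ∀ x ∈ K, connectedComponentIn K x ∈ I)
    (δ : ℝ) (hδ : 0 < δ) (K' : Set X) (hK' : K' ⊆ K) (hchain : DeltaConnected δ K') :
    ENNReal.ofReal (Metric.diam K' - m * δ) ≤ μH[1] K := by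
  classical
  obtain ⟨I, hIcard, hI⟩ := hcomp
  set J := I.filter fun C => ∃ x, connectedComponentIn K x = C
  have hJcover : ∀ x ∈ K, ∃ C ∈ J, x ∈ C := fun x hx =>
    ⟨_, mem_filter.2 ⟨hI x hx, x, rfl⟩, mem_connectedComponentIn hx⟩
  have hdist : ∀ x ∈ K', ∀ y ∈ K', edist x y ≤ μH[1] K + m * ENNReal.ofReal δ := by
    intro x hx y hy
    obtain ⟨n, c, hcK', rfl, rfl, hstep⟩ := hchain.exists_nat_chain hx hy
    calc edist (c 0) (c n) ≤ ∑ C ∈ J, ediam C + #J * ENNReal.ofReal δ :=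
          edist_le_sum_ediam_add_card_mul J (fun i hi => hJcover _ (hK' (hcK' i hi)))
            fun i hi => edist_dist (c i) _ ▸ ENNReal.ofReal_le_ofReal (hstep i hi)
      _ ≤ μH[1] K + m * ENNReal.ofReal δ := by
          gcongr
          · exact sum_ediam_connectedComponentIn_le_hausdorffMeasure hK.isClosed J
              fun C hC => (mem_filter.1 hC).2
          · exact (card_filter_le _ _).trans hIcard
  calc ENNReal.ofReal (diam K' - m * δ) = ENNReal.ofReal (diam K') - m * ENNReal.ofReal δ := by
        rw [ENNReal.ofReal_sub _ (mul_nonneg m.cast_nonneg hδ.le), ENNReal.ofReal_mul m.cast_nonneg,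
          ENNReal.ofReal_natCast]
    _ ≤ ediam K' - m * ENNReal.ofReal δ := by gcongr; exact ENNReal.ofReal_toReal_le
    _ ≤ μH[1] K := tsub_le_iff_right.2 (ediam_le hdist)

theorem stmt8 {X : Type*} [MetricSpace X] [MeasurableSpace X] [BorelSpace X]
    (K : Set X) (hK : IsCompact K) (m : ℕ) (hm : 0 < m)
    (hcomp : ∃ I : Finset (Set X), I.card ≤ m ∧ ∀ x ∈ K, connectedComponentIn K x ∈ I)
    (δ : ℝ) (hδ : 0 < δ) (K' : Set X) (hK' : K' ⊆ K) (hchain : DeltaConnected δ K') :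
    ENNReal.ofReal (Metric.diam K' - m * δ) ≤ μH[1] K :=
  stmt8_general K hK m hcomp δ hδ K' hK' hchain
end

section
/- Let γ : I → X be a path with finite length in a metric space X. Then the multiplicity function x ↦ m(γ,x) := #(γ^{-1}(x)) is Borel measurable and length(γ) = ∫_X m(γ,x) dH^1(x). In particular, m(γ,x) is finite for H^1-almost every x ∈ X. -/
/-!
Lower bound: for a partition `t₀ ≤ ⋯ ≤ tₙ` of `[a, b]`, each chord `d(γ tᵢ, γ tᵢ₊₁)` is at most
`H¹(γ [tᵢ, tᵢ₊₁))`, since the closed image is connected and differs from it by one point; the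
half-open cells are disjoint, so `∑ᵢ 1_{γ [tᵢ, tᵢ₊₁)} ≤ m(γ, ·)` pointwise.

Upper bound: reparametrising by arc length (a 1-Lipschitz map) gives `H¹(γ s) ≤ length(γ|s)`
for every `s ⊆ ℝ`. Hence the number `Nₙ(x)` of cells of the uniform partition of `[a, b)` into
`n` cells whose image contains `x` satisfies `∫ Nₙ dH¹ ≤ length(γ)`. Any finitely many preimages
of `x` eventually lie in distinct cells, so `Nₙ → m(γ|[a, b), ·)` pointwise, and Fatou's lemma
concludes. The endpoint `b` only changes the multiplicity on the `H¹`-null set `{γ b}`.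
-/

open MeasureTheory ENNReal Set

/-- The multiplicity of the path `γ` (restricted to `I`) at the point `x`:
the number of preimages of `x` in `I`, as an extended nonnegative real. -/
noncomputable def pathMult {X : Type*} (γ : ℝ → X) (I : Set ℝ) (x : X) : ℝ≥0∞ :=
  ∑' _ : (γ ⁻¹' {x} ∩ I : Set ℝ), (1 : ℝ≥0∞)

open Filter Topology

theorem Set.tendsto_encard_image {α β ι : Type*} {l : Filter ι} {A : Set α} {q : ι → α → β}
    (hq : ∀ s ∈ A, ∀ t ∈ A, s ≠ t → ∀ᶠ i in l, q i s ≠ q i t) :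
    Tendsto (fun i => (q i '' A).encard) l (𝓝 A.encard) := by
  refine tendsto_order.2 ⟨fun k hk => ?_, fun k hk =>
    Eventually.of_forall fun i => (encard_image_le _ _).trans_lt hk⟩
  lift k to ℕ using hk.ne_top
  obtain ⟨F, hFA, hFk⟩ := exists_subset_encard_eq ((ENat.add_one_le_iff (by simp)).2 hk)
  have hF : F.Finite := finite_of_encard_eq_coe (k := k + 1) (by rw [hFk]; norm_cast)
  have hinj : ∀ᶠ i in l, InjOn (q i) F :=
    ((eventually_all_finite hF.offDiag).2 fun p hp => hq _ (hFA hp.1) _ (hFA hp.2.1) hp.2.2).mono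
      fun i h s hs t ht hst => by_contra fun hne => h (s, t) ⟨hs, ht, hne⟩ hst
  filter_upwards [hinj] with i hi
  calc (k : ℕ∞) < k + 1 := by norm_cast; omega
    _ = (q i '' F).encard := by rw [hi.encard_image, hFk]
    _ ≤ (q i '' A).encard := encard_le_encard (image_mono hFA)

theorem indicator_image_le_encard {α X : Type*} (γ : α → X) (s : Set α) (x : X) :
    (γ '' s).indicator 1 x ≤ ((γ ⁻¹' {x} ∩ s).encard : ℝ≥0∞) := by
  by_cases hx : x ∈ γ '' s
  · obtain ⟨t, ht, rfl⟩ := hx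
    rw [indicator_of_mem (mem_image_of_mem γ ht), Pi.one_apply, ← ENat.toENNReal_one,
      ENat.toENNReal_le, one_le_encard_iff_nonempty]
    exact ⟨t, mem_singleton _, ht⟩
  · simp [indicator_of_notMem hx]

theorem sum_indicator_image_Ico_le_encard {X : Type*} (γ : ℝ → X) {u : ℕ → ℝ} (hu : Monotone u)
    (x : X) (n : ℕ) :
    ∑ k ∈ Finset.range n, (γ '' Ico (u k) (u (k + 1))).indicator 1 x
      ≤ ((γ ⁻¹' {x} ∩ Ico (u 0) (u n)).encard : ℝ≥0∞) := by
  induction n with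
  | zero => simp
  | succ n ih =>
    have hsplit : γ ⁻¹' {x} ∩ Ico (u 0) (u (n + 1))
        = (γ ⁻¹' {x} ∩ Ico (u 0) (u n)) ∪ (γ ⁻¹' {x} ∩ Ico (u n) (u (n + 1))) := by
      rw [← inter_union_distrib_left, Ico_union_Ico_eq_Ico (hu n.zero_le) (hu n.le_succ)]
    have hdisj : Disjoint (γ ⁻¹' {x} ∩ Ico (u 0) (u n)) (γ ⁻¹' {x} ∩ Ico (u n) (u (n + 1))) :=
      (Ico_disjoint_Ico_same).mono inter_subset_right inter_subset_right
    rw [Finset.sum_range_succ, hsplit, encard_union_eq hdisj, ENat.toENNReal_add]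
    exact add_le_add ih (indicator_image_le_encard γ _ x)

theorem encard_le_sum_indicator {ι α : Type*} {K : Finset ι} {T : Set ι} (hTK : T ⊆ K)
    {S : ι → Set α} {x : α} (hT : ∀ k ∈ T, x ∈ S k) :
    (T.encard : ℝ≥0∞) ≤ ∑ k ∈ K, (S k).indicator 1 x := by
  obtain ⟨T, rfl⟩ := (K.finite_toSet.subset hTK).exists_finset_coe
  calc ((T : Set ι).encard : ℝ≥0∞) = ∑ k ∈ T, (S k).indicator 1 x := by
        rw [encard_coe_eq_coe_finsetCard, ENat.toENNReal_coe, Finset.card_eq_sum_ones,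
          Nat.cast_sum, Nat.cast_one]
        exact Finset.sum_congr rfl fun k hk => by rw [indicator_of_mem (hT k hk), Pi.one_apply]
    _ ≤ ∑ k ∈ K, (S k).indicator 1 x := Finset.sum_le_sum_of_subset (by exact_mod_cast hTK)

theorem eVariationOn.sum_Ico_le {E : Type*} [PseudoEMetricSpace E] (f : ℝ → E) {u : ℕ → ℝ}
    (hu : Monotone u) (n : ℕ) :
    ∑ k ∈ Finset.range n, eVariationOn f (Ico (u k) (u (k + 1)))
      ≤ eVariationOn f (Ico (u 0) (u n)) := by
  induction n with
  | zero => simp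
  | succ n ih =>
    rw [Finset.sum_range_succ, ← Ico_union_Ico_eq_Ico (hu n.zero_le) (hu n.le_succ)]
    exact (add_le_add ih le_rfl).trans
      (eVariationOn.add_le_union f fun _ hs _ ht => hs.2.le.trans ht.1)

theorem measurableSet_image_Ico {X : Type*} [TopologicalSpace X] [T2Space X] [MeasurableSpace X]
    [OpensMeasurableSpace X] {γ : ℝ → X} {u v : ℝ} (hγ : ContinuousOn γ (Icc u v)) :
    MeasurableSet (γ '' Ico u v) := by
  have hIco : Ico u v = ⋃ r : ℚ, ⋃ (_ : (r : ℝ) < v), Icc u (r : ℝ) := by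
    ext t
    simp only [mem_Ico, mem_iUnion, mem_Icc, exists_prop]
    constructor
    · rintro ⟨hut, htv⟩
      obtain ⟨r, htr, hrv⟩ := exists_rat_btwn htv
      exact ⟨r, hrv, hut, htr.le⟩
    · rintro ⟨r, hrv, hut, htr⟩
      exact ⟨hut, htr.trans_lt hrv⟩
  rw [hIco, image_iUnion₂]
  exact .iUnion fun r => .iUnion fun hr =>
    (isCompact_Icc.image_of_continuousOn (hγ.mono (Icc_subset_Icc le_rfl hr.le))).measurableSet


section Hausdorff

variable {X : Type*} [EMetricSpace X] [MeasurableSpace X] [BorelSpace X]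

instance : NullSingletonClass (μH[1] : Measure X) := Measure.nullSingletonClass_hausdorff X one_pos

theorem hausdorffMeasure_image_le_eVariationOn (f : ℝ → X) (s : Set ℝ) :
    μH[1] (f '' s) ≤ eVariationOn f s := by
  rcases eq_or_ne (eVariationOn f s) ⊤ with hV | hV
  · exact hV ▸ le_top
  rcases s.eq_empty_or_nonempty with rfl | ⟨a, ha⟩
  · simp
  have hf : LocallyBoundedVariationOn f s := BoundedVariationOn.locallyBoundedVariationOn hV
  set v := variationOnFromTo f s a with hv_def
  set φ := naturalParameterization f s a
  have hφv : ∀ t ∈ s, φ (v t) = f t := fun t ht =>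
    edist_eq_zero.1 (edist_naturalParameterization_eq_zero hf ha ht)
  have hv : ∀ t ∈ s, ∀ t' ∈ s, t ≤ t' → edist (v t) (v t') = eVariationOn f (s ∩ Icc t t') := by
    intro t ht t' ht' htt'
    rw [edist_comm, edist_dist, Real.dist_eq, hv_def, ← variationOnFromTo.add hf ha ht ht',
      add_sub_cancel_left, variationOnFromTo.eq_of_le f s htt', abs_of_nonneg toReal_nonneg,
      ofReal_toReal (ne_top_of_le_ne_top hV (eVariationOn.mono f inter_subset_left))]
  have hlip : LipschitzOnWith 1 φ (v '' s) := by
    suffices ∀ t ∈ s, ∀ t' ∈ s, t ≤ t' → edist (φ (v t)) (φ (v t')) ≤ edist (v t) (v t') by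
      rintro _ ⟨t, ht, rfl⟩ _ ⟨t', ht', rfl⟩
      rw [ENNReal.coe_one, one_mul]
      rcases le_total t t' with h | h
      · exact this t ht t' ht' h
      · rw [edist_comm, edist_comm (v t)]; exact this t' ht' t ht h
    intro t ht t' ht' htt'
    rw [hφv t ht, hφv t' ht', hv t ht t' ht' htt']
    exact eVariationOn.edist_le f ⟨ht, le_rfl, htt'⟩ ⟨ht', htt', le_rfl⟩
  have hdiam : Metric.ediam (v '' s) ≤ eVariationOn f s := by
    refine Metric.ediam_le ?_
    rintro _ ⟨t, ht, rfl⟩ _ ⟨t', ht', rfl⟩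
    rcases le_total t t' with h | h
    · exact (hv t ht t' ht' h).trans_le (eVariationOn.mono f inter_subset_left)
    · rw [edist_comm]; exact (hv t' ht' t ht h).trans_le (eVariationOn.mono f inter_subset_left)
  calc μH[1] (f '' s) = μH[1] (φ '' (v '' s)) := by
        rw [image_image]; exact congrArg _ (image_congr fun t ht => (hφv t ht).symm)
    _ ≤ μH[1] (v '' s) := by simpa using hlip.hausdorffMeasure_image_le zero_le_one
    _ ≤ Metric.ediam (v '' s) := by rw [hausdorffMeasure_real]; exact Real.volume_le_diam _
    _ ≤ eVariationOn f s := hdiam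

end Hausdorff

section Metric

variable {X : Type*} [MetricSpace X] [MeasurableSpace X] [BorelSpace X]

theorem edist_le_hausdorffMeasure_of_isPreconnected {s : Set X} (hs : IsPreconnected s) {x y : X}
    (hx : x ∈ s) (hy : y ∈ s) : edist x y ≤ μH[1] s := by
  have hf : LipschitzWith 1 (dist x) := LipschitzWith.dist_right x
  have hIcc : Icc 0 (dist x y) ⊆ dist x '' s :=
    (hs.image _ hf.continuous.continuousOn).Icc_subset ⟨x, hx, dist_self x⟩ ⟨y, hy, rfl⟩
  calc edist x y = μH[1] (Icc 0 (dist x y)) := by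
        rw [hausdorffMeasure_real, Real.volume_Icc, sub_zero, edist_dist]
    _ ≤ μH[1] (dist x '' s) := measure_mono hIcc
    _ ≤ μH[1] s := by simpa using hf.hausdorffMeasure_image_le zero_le_one s

theorem edist_le_hausdorffMeasure_image_Ico {γ : ℝ → X} {u v : ℝ} (huv : u ≤ v)
    (hγ : ContinuousOn γ (Icc u v)) : edist (γ u) (γ v) ≤ μH[1] (γ '' Ico u v) := by
  calc edist (γ u) (γ v) ≤ μH[1] (γ '' Icc u v) :=
        edist_le_hausdorffMeasure_of_isPreconnected (isPreconnected_Icc.image γ hγ)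
          (mem_image_of_mem γ (left_mem_Icc.2 huv)) (mem_image_of_mem γ (right_mem_Icc.2 huv))
    _ = μH[1] (γ '' Ico u v) := by
        rw [← Ico_insert_right huv, image_insert_eq, measure_congr (insert_ae_eq_self _ _)]

end Metric

section UniformGrid

variable {a b : ℝ}

noncomputable def uniformGrid (a b : ℝ) (n k : ℕ) : ℝ := a + k * ((b - a) / n)

theorem uniformGrid_zero (n : ℕ) : uniformGrid a b n 0 = a := by simp [uniformGrid]

theorem uniformGrid_self {n : ℕ} (hn : n ≠ 0) : uniformGrid a b n n = b := by
  have : (n : ℝ) ≠ 0 := Nat.cast_ne_zero.2 hn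
  simp only [uniformGrid]; field_simp; ring

theorem uniformGrid_succ_sub (n k : ℕ) :
    uniformGrid a b n (k + 1) - uniformGrid a b n k = (b - a) / n := by
  simp only [uniformGrid]; push_cast; ring

theorem uniformGrid_mono (hab : a ≤ b) (n : ℕ) : Monotone (uniformGrid a b n) := fun k l hkl => by
  unfold uniformGrid; gcongr

theorem Icc_uniformGrid_subset (hab : a ≤ b) {n k : ℕ} (hk : k < n) :
    Icc (uniformGrid a b n k) (uniformGrid a b n (k + 1)) ⊆ Icc a b :=
  Icc_subset_Icc ((uniformGrid_zero n).symm.trans_le (uniformGrid_mono hab n k.zero_le))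
    ((uniformGrid_mono hab n hk).trans_eq (uniformGrid_self (by omega)))

theorem mem_Ico_uniformGrid_floor {n : ℕ} (hn : n ≠ 0) {t : ℝ} (ht : t ∈ Ico a b) :
    ⌊(t - a) / ((b - a) / n)⌋₊ < n ∧ t ∈ Ico (uniformGrid a b n ⌊(t - a) / ((b - a) / n)⌋₊)
      (uniformGrid a b n (⌊(t - a) / ((b - a) / n)⌋₊ + 1)) := by
  have hh : 0 < (b - a) / n := div_pos (by linarith [ht.1, ht.2]) (by positivity)
  have hr : 0 ≤ (t - a) / ((b - a) / n) := div_nonneg (by linarith [ht.1]) hh.le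
  refine ⟨(Nat.floor_lt hr).2 ?_, ?_, ?_⟩
  · rw [div_lt_iff₀ hh, mul_div_cancel₀ _ (by positivity)]; linarith [ht.2]
  · have := Nat.floor_le hr
    rw [le_div_iff₀ hh] at this
    simp only [uniformGrid]; linarith
  · have := Nat.lt_floor_add_one ((t - a) / ((b - a) / n))
    rw [div_lt_iff₀ hh] at this
    simp only [uniformGrid]; push_cast; linarith

end UniformGrid

theorem pathMult_eq_encard {X : Type*} (γ : ℝ → X) (I : Set ℝ) (x : X) :
    pathMult γ I x = (γ ⁻¹' {x} ∩ I).encard :=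
  ENNReal.tsum_set_one _

theorem pathMult_Icc_eq {X : Type*} (γ : ℝ → X) {a b : ℝ} (hab : a ≤ b) (x : X) :
    pathMult γ (Icc a b) x = pathMult γ (Ico a b) x + ({γ b} : Set X).indicator 1 x := by
  have hdisj : Disjoint (γ ⁻¹' {x} ∩ Ico a b) (γ ⁻¹' {x} ∩ {b}) :=
    (disjoint_singleton_right.2 fun h => lt_irrefl b h.2).mono inter_subset_right inter_subset_right
  rw [pathMult_eq_encard, pathMult_eq_encard, ← Ico_union_right hab, inter_union_distrib_left,
    encard_union_eq hdisj, ENat.toENNReal_add]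
  by_cases hb : γ b = x
  · have : γ ⁻¹' {x} ∩ {b} = {b} := inter_eq_right.2 (by simpa using hb)
    rw [this, encard_singleton,
      indicator_of_mem (mem_singleton_of_eq hb.symm), ENat.toENNReal_one, Pi.one_apply]
  · have : γ ⁻¹' {x} ∩ {b} = ∅ := inter_singleton_eq_empty.2 (by simpa using hb)
    rw [this, encard_empty,
      indicator_of_notMem (fun h => hb (mem_singleton_iff.1 h).symm), ENat.toENNReal_zero]

noncomputable def cellCount {X : Type*} (γ : ℝ → X) (a b : ℝ) (n : ℕ) (x : X) : ℝ≥0∞ :=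
  ∑ k ∈ Finset.range n,
    (γ '' Ico (uniformGrid a b n k) (uniformGrid a b n (k + 1))).indicator 1 x

section CellCount

variable {X : Type*} (γ : ℝ → X) {a b : ℝ} (hab : a ≤ b)
include hab

theorem cellCount_le_pathMult (n : ℕ) (x : X) : cellCount γ a b n x ≤ pathMult γ (Ico a b) x := by
  rcases eq_or_ne n 0 with rfl | hn
  · simp [cellCount]
  have := sum_indicator_image_Ico_le_encard γ (uniformGrid_mono hab n) x n
  rwa [uniformGrid_zero, uniformGrid_self hn, ← pathMult_eq_encard] at this

theorem tendsto_cellCount (x : X) :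
    Tendsto (fun n => cellCount γ a b n x) atTop (𝓝 (pathMult γ (Ico a b) x)) := by
  set A := γ ⁻¹' {x} ∩ Ico a b
  set q : ℕ → ℝ → ℕ := fun n t => ⌊(t - a) / ((b - a) / n)⌋₊
  have hsep : ∀ s ∈ A, ∀ t ∈ A, s ≠ t → ∀ᶠ n in atTop, q n s ≠ q n t := by
    intro s hs t ht hst
    have hmesh : Tendsto (fun n : ℕ => (b - a) / n) atTop (𝓝 0) :=
      tendsto_const_div_atTop_nhds_zero_nat (b - a)
    filter_upwards [hmesh.eventually (gt_mem_nhds (abs_sub_pos.2 hst)), eventually_ne_atTop 0]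
      with n hn hn0 hq
    obtain ⟨-, hs₁, hs₂⟩ := mem_Ico_uniformGrid_floor hn0 hs.2
    obtain ⟨-, ht₁, ht₂⟩ := mem_Ico_uniformGrid_floor hn0 ht.2
    have := uniformGrid_succ_sub (a := a) (b := b) n (q n t)
    simp only [q] at hq this
    rw [hq] at hs₁ hs₂
    exact hn.not_ge (abs_sub_lt_iff.2 ⟨by linarith, by linarith⟩).le
  have hlower : ∀ᶠ n in atTop, ((q n '' A).encard : ℝ≥0∞) ≤ cellCount γ a b n x := by
    filter_upwards [eventually_ne_atTop 0] with n hn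
    refine encard_le_sum_indicator ?_ ?_
    · rintro _ ⟨t, ht, rfl⟩
      simpa using (mem_Ico_uniformGrid_floor hn ht.2).1
    · rintro _ ⟨t, ht, rfl⟩
      exact ⟨t, (mem_Ico_uniformGrid_floor hn ht.2).2, ht.1⟩
  rw [pathMult_eq_encard]
  exact tendsto_of_tendsto_of_tendsto_of_le_of_le'
    ((ENat.continuous_toENNReal.tendsto _).comp (tendsto_encard_image hsep))
    tendsto_const_nhds hlower
    (Eventually.of_forall fun n =>
      (cellCount_le_pathMult γ hab n x).trans_eq (pathMult_eq_encard ..))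

end CellCount

section Integral

variable {X : Type*} [MetricSpace X] [MeasurableSpace X] [BorelSpace X] {γ : ℝ → X} {a b : ℝ}

theorem measurable_cellCount (hab : a ≤ b) (hγ : ContinuousOn γ (Icc a b)) (n : ℕ) :
    Measurable (cellCount γ a b n) :=
  Finset.measurable_sum _ fun _ hk => measurable_one.indicator
    (measurableSet_image_Ico (hγ.mono (Icc_uniformGrid_subset hab (Finset.mem_range.1 hk))))

theorem lintegral_cellCount_le (hab : a ≤ b) (hγ : ContinuousOn γ (Icc a b)) (n : ℕ) :
    ∫⁻ x, cellCount γ a b n x ∂μH[1] ≤ eVariationOn γ (Icc a b) := by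
  rcases eq_or_ne n 0 with rfl | hn
  · simp [cellCount]
  have hmeas : ∀ k ∈ Finset.range n,
      MeasurableSet (γ '' Ico (uniformGrid a b n k) (uniformGrid a b n (k + 1))) := fun k hk =>
    measurableSet_image_Ico (hγ.mono (Icc_uniformGrid_subset hab (Finset.mem_range.1 hk)))
  calc ∫⁻ x, cellCount γ a b n x ∂μH[1]
      = ∑ k ∈ Finset.range n,
          μH[1] (γ '' Ico (uniformGrid a b n k) (uniformGrid a b n (k + 1))) := by
        simp only [cellCount]
        rw [lintegral_finsetSum _ fun k hk => measurable_one.indicator (hmeas k hk)]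
        exact Finset.sum_congr rfl fun k hk => lintegral_indicator_one (hmeas k hk)
    _ ≤ ∑ k ∈ Finset.range n,
          eVariationOn γ (Ico (uniformGrid a b n k) (uniformGrid a b n (k + 1))) :=
        Finset.sum_le_sum fun k _ => hausdorffMeasure_image_le_eVariationOn γ _
    _ ≤ eVariationOn γ (Ico (uniformGrid a b n 0) (uniformGrid a b n n)) :=
        eVariationOn.sum_Ico_le γ (uniformGrid_mono hab n) n
    _ ≤ eVariationOn γ (Icc a b) := by
        rw [uniformGrid_zero, uniformGrid_self hn]
        exact eVariationOn.mono γ Ico_subset_Icc_self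

theorem lintegral_pathMult_Ico_le (hab : a ≤ b) (hγ : ContinuousOn γ (Icc a b)) :
    ∫⁻ x, pathMult γ (Ico a b) x ∂μH[1] ≤ eVariationOn γ (Icc a b) :=
  calc ∫⁻ x, pathMult γ (Ico a b) x ∂μH[1]
      = ∫⁻ x, liminf (fun n => cellCount γ a b n x) atTop ∂μH[1] :=
        lintegral_congr fun x => (tendsto_cellCount γ hab x).liminf_eq.symm
    _ ≤ liminf (fun n => ∫⁻ x, cellCount γ a b n x ∂μH[1]) atTop :=
        lintegral_liminf_le (measurable_cellCount hab hγ)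
    _ ≤ eVariationOn γ (Icc a b) :=
        liminf_le_of_frequently_le' (Frequently.of_forall (lintegral_cellCount_le hab hγ))

theorem eVariationOn_le_lintegral_pathMult (hγ : ContinuousOn γ (Icc a b)) :
    eVariationOn γ (Icc a b) ≤ ∫⁻ x, pathMult γ (Icc a b) x ∂μH[1] := by
  refine iSup_le fun ⟨n, u, hu, hus⟩ => ?_
  have hsub : ∀ i, Icc (u i) (u (i + 1)) ⊆ Icc a b := fun i =>
    Icc_subset_Icc (hus i).1 (hus (i + 1)).2
  have hmeas : ∀ i, MeasurableSet (γ '' Ico (u i) (u (i + 1))) := fun i =>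
    measurableSet_image_Ico (hγ.mono (hsub i))
  calc ∑ i ∈ Finset.range n, edist (γ (u (i + 1))) (γ (u i))
      ≤ ∑ i ∈ Finset.range n, μH[1] (γ '' Ico (u i) (u (i + 1))) :=
        Finset.sum_le_sum fun i _ => edist_comm (γ (u i)) _ ▸
          edist_le_hausdorffMeasure_image_Ico (hu i.le_succ) (hγ.mono (hsub i))
    _ = ∫⁻ x, ∑ i ∈ Finset.range n, (γ '' Ico (u i) (u (i + 1))).indicator 1 x ∂μH[1] := by
        rw [lintegral_finsetSum _ fun i _ => measurable_one.indicator (hmeas i)]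
        exact Finset.sum_congr rfl fun i _ => (lintegral_indicator_one (hmeas i)).symm
    _ ≤ ∫⁻ x, pathMult γ (Icc a b) x ∂μH[1] := by
        refine lintegral_mono fun x => (sum_indicator_image_Ico_le_encard γ hu x n).trans ?_
        rw [pathMult_eq_encard, ENat.toENNReal_le]
        exact encard_le_encard (inter_subset_inter_right _
          (Ico_subset_Icc_self.trans (Icc_subset_Icc (hus 0).1 (hus n).2)))

end Integral

theorem stmt15 {X : Type*} [MetricSpace X] [MeasurableSpace X] [BorelSpace X]
    (a b : ℝ) (hab : a ≤ b) (γ : ℝ → X) (hγ : ContinuousOn γ (Icc a b))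
    (hfin : eVariationOn γ (Icc a b) < ⊤) :
    Measurable (pathMult γ (Icc a b)) ∧
      eVariationOn γ (Icc a b) = ∫⁻ x, pathMult γ (Icc a b) x ∂μH[1] ∧
      ∀ᵐ x ∂(μH[1] : Measure X), pathMult γ (Icc a b) x < ⊤ := by
  have hmeas_Ico : Measurable (pathMult γ (Ico a b)) :=
    measurable_of_tendsto (measurable_cellCount hab hγ)
      (tendsto_pi_nhds.2 (tendsto_cellCount γ hab))
  have hmeas : Measurable (pathMult γ (Icc a b)) := by
    rw [funext (pathMult_Icc_eq γ hab)]
    exact hmeas_Ico.add (measurable_one.indicator (measurableSet_singleton _))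
  have hae : pathMult γ (Icc a b) =ᵐ[μH[1]] pathMult γ (Ico a b) := by
    filter_upwards [Measure.ae_ne μH[1] (γ b)] with x hx
    rw [pathMult_Icc_eq γ hab, indicator_of_notMem (mt mem_singleton_iff.1 hx), add_zero]
  have heq : eVariationOn γ (Icc a b) = ∫⁻ x, pathMult γ (Icc a b) x ∂μH[1] :=
    le_antisymm (eVariationOn_le_lintegral_pathMult hγ)
      ((lintegral_congr_ae hae).trans_le (lintegral_pathMult_Ico_le hab hγ))
  exact ⟨hmeas, heq, ae_lt_top hmeas (heq ▸ hfin.ne)⟩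
end
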